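/- arXiv:1004.2653 — 4 statements merged into one kernel-verified Lean document; each statement's English description precedes it below -/
import Mathlib

section
/- Let f : ℝ → ℝ be a continuous function satisfying f(x + π) = f(x) and f(π − x) = f(x) for all x ≥ 0, and suppose the integrals ∫₀^∞ (sin²x / x²) f(x) dx and ∫₀^∞ (sin x / x) f(x) dx (the latter as an improper integral) both exist. Then ∫₀^∞ (sin²x / x²) f(x) dx = ∫₀^∞ (sin x / x) f(x) dx. -/
/-!
Cut `[0, Nπ]` into periods and fold each period back onto `[0, π]` using `f (x + π) = f x` and
`f (π - x) = f x`: for a kernel `k`, `2 ∫₀^{Nπ} k f = ∫₀^π K_N f` with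
`K_N x = ∑_{n < N} (k (x + nπ) + k ((n + 1)π - x))`. For `k = (sin x / x)²` this is `sin² x` times
a symmetric partial sum of `∑_{k ∈ ℤ} (x + kπ)⁻²`, and for `k = sin x / x` it is `sin x` times a
partial sum of the alternating series `∑ (-1)ⁿ ((x + nπ)⁻¹ + ((n + 1)π - x)⁻¹)`.

The partial fraction expansion `∑_{k ∈ ℤ} (x + kπ)⁻² = 1 / sin² x` follows from Herglotz's trick:
the difference of the two sides is bounded on `(0, π)` and satisfies
`D x = (D (x / 2) + D ((x + π) / 2)) / 4`, hence vanishes. Integrating it termwise gives the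
expansion of `cot a - cot b`, and `cot (x / 2) - cot ((x + π) / 2) = 2 / sin x` turns that into
the alternating series for `1 / sin x`. So both folded kernels tend to `1` on `(0, π)` and stay
bounded there, and by dominated convergence both integrals equal `½ ∫₀^π f`.
-/

open Real Filter MeasureTheory intervalIntegral Set Topology

theorem HasSum.int_even_add_odd {M : Type*} [AddCommMonoid M] [TopologicalSpace M]
    [ContinuousAdd M] {f : ℤ → M} {a b : M} (he : HasSum (fun k ↦ f (2 * k)) a)
    (ho : HasSum (fun k ↦ f (2 * k + 1)) b) : HasSum f (a + b) := by
  have := mul_right_injective₀ (two_ne_zero' ℤ)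
  replace ho := ((add_left_injective 1).comp this).hasSum_range_iff.2 ho
  refine (this.hasSum_range_iff.2 he).add_isCompl ?_ ho
  simpa [Function.comp_def] using Int.isCompl_even_odd

lemma summable_one_div_add_int_mul_sq {c : ℝ} (hc : c ≠ 0) (x : ℝ) :
    Summable fun k : ℤ ↦ 1 / (x + k * c) ^ 2 := by
  refine (((Real.summable_one_div_int_add_rpow (x / c) 2).mpr one_lt_two).mul_left
    (1 / c ^ 2)).congr fun k ↦ ?_
  rw [Real.rpow_two, sq_abs, show x + k * c = c * (k + x / c) by field_simp; ring]
  field_simp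

lemma add_int_mul_pi_ne_zero {x : ℝ} (hx : x ∈ Ioo 0 π) (k : ℤ) : x + k * π ≠ 0 := fun h ↦
  (sin_pos_of_pos_of_lt_pi hx.1 hx.2).ne' (sin_eq_zero_iff.mpr ⟨-k, by push_cast; linarith⟩)

lemma sin_eq_two_mul_sin_half_mul_cos_half (x : ℝ) : sin x = 2 * sin (x / 2) * cos (x / 2) := by
  rw [← sin_two_mul]
  ring_nf

/-- At `x ∈ πℤ` the singular term is `1 / 0 = 0`, so this is a convergent sum for every `x`. -/
noncomputable def cscSqSum (x : ℝ) : ℝ := ∑' k : ℤ, 1 / (x + k * π) ^ 2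

lemma hasSum_cscSqSum (x : ℝ) : HasSum (fun k : ℤ ↦ 1 / (x + k * π) ^ 2) (cscSqSum x) :=
  (summable_one_div_add_int_mul_sq pi_ne_zero x).hasSum

lemma hasSum_cscSqSum_nat (x : ℝ) :
    HasSum (fun n : ℕ ↦ 1 / (x + n * π) ^ 2 + 1 / ((n + 1) * π - x) ^ 2) (cscSqSum x) :=
  (hasSum_cscSqSum x).nat_add_neg_add_one.congr_fun fun n ↦ by
    push_cast
    rw [show x + (-(n + 1)) * π = -((n + 1) * π - x) by ring, neg_sq]

lemma cscSqSum_eq_duplication (x : ℝ) :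
    cscSqSum x = (cscSqSum (x / 2) + cscSqSum ((x + π) / 2)) / 4 := by
  rw [add_div]
  refine (HasSum.int_even_add_odd ?_ ?_).tsum_eq
  · refine ((hasSum_cscSqSum (x / 2)).div_const 4).congr_fun fun k ↦ ?_
    push_cast
    field_simp
    ring
  · refine ((hasSum_cscSqSum ((x + π) / 2)).div_const 4).congr_fun fun k ↦ ?_
    push_cast
    field_simp
    ring

lemma one_div_sin_sq_eq_duplication {x : ℝ} (hx : sin x ≠ 0) :
    1 / sin x ^ 2 = (1 / sin (x / 2) ^ 2 + 1 / sin ((x + π) / 2) ^ 2) / 4 := by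
  rw [sin_eq_two_mul_sin_half_mul_cos_half] at hx ⊢
  have hs : sin (x / 2) ≠ 0 := by rintro h; simp [h] at hx
  have hc : cos (x / 2) ≠ 0 := by rintro h; simp [h] at hx
  rw [show (x + π) / 2 = x / 2 + π / 2 by ring, sin_add_pi_div_two]
  field_simp
  linear_combination (-4) * sin_sq_add_cos_sq (x / 2)

lemma eq_zero_of_abs_le_of_duplication {D : ℝ → ℝ} {C : ℝ}
    (hC : ∀ x ∈ Ioo 0 π, |D x| ≤ C)
    (hD : ∀ x ∈ Ioo 0 π, D x = (D (x / 2) + D ((x + π) / 2)) / 4) :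
    ∀ x ∈ Ioo 0 π, D x = 0 := by
  have hhalf : ∀ x ∈ Ioo 0 π, x / 2 ∈ Ioo 0 π ∧ (x + π) / 2 ∈ Ioo 0 π := fun x ⟨h₀, h₁⟩ ↦
    ⟨⟨by linarith, by linarith⟩, ⟨by linarith, by linarith⟩⟩
  have hpow : ∀ n : ℕ, ∀ x ∈ Ioo 0 π, 2 ^ n * |D x| ≤ C := by
    intro n
    induction n with
    | zero => simpa using hC
    | succ n ih =>
      intro x hx
      have h₁ := ih _ (hhalf x hx).1
      have h₂ := ih _ (hhalf x hx).2
      have := abs_add_le (D (x / 2)) (D ((x + π) / 2))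
      rw [hD x hx, abs_div, abs_of_pos (by norm_num : (0 : ℝ) < 4), pow_succ]
      nlinarith [pow_pos (two_pos : (0 : ℝ) < 2) n]
  intro x hx
  by_contra h
  obtain ⟨n, hn⟩ := pow_unbounded_of_one_lt (C / |D x|) one_lt_two
  rw [div_lt_iff₀ (abs_pos.mpr h)] at hn
  linarith [hpow n x hx]

lemma mul_cos_le_sin {x : ℝ} (hx₀ : 0 ≤ x) (hx : x ≤ π / 2) : x * cos x ≤ sin x := by
  rcases hx.lt_or_eq with hx | rfl
  · have hc : 0 < cos x := cos_pos_of_mem_Ioo ⟨by linarith [pi_pos], hx⟩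
    have := le_tan hx₀ hx
    rwa [tan_eq_sin_div_cos, le_div_iff₀ hc] at this
  · simp

lemma one_div_sin_sq_sub_one_div_sq_mem_Icc {x : ℝ} (hx₀ : 0 < x) (hx : x ≤ π / 2) :
    1 / sin x ^ 2 - 1 / x ^ 2 ∈ Icc 0 1 := by
  have hs : 0 < sin x := sin_pos_of_pos_of_lt_pi hx₀ (by linarith [pi_pos])
  have h₁ : sin x ≤ x := sin_le hx₀.le
  have h₂ := mul_cos_le_sin hx₀.le hx
  have hc : 0 ≤ cos x := cos_nonneg_of_mem_Icc ⟨by linarith [pi_pos], hx⟩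
  constructor
  · rw [sub_nonneg]
    gcongr
  · rw [sub_le_iff_le_add, one_add_div (by positivity),
      div_le_div_iff₀ (by positivity) (by positivity)]
    nlinarith [sin_sq_add_cos_sq x, mul_le_mul h₂ h₂ (mul_nonneg hx₀.le hc) hs.le]

lemma abs_one_div_sin_sq_sub_le_one {x : ℝ} (hx : x ∈ Ioo 0 π) :
    |1 / sin x ^ 2 - 1 / x ^ 2 - 1 / (π - x) ^ 2| ≤ 1 := by
  wlog h : x ≤ π / 2 generalizing x
  · have := this (x := π - x) ⟨by linarith [hx.2], by linarith [hx.1]⟩ (by linarith)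
    rwa [sin_pi_sub, sub_sub_cancel, sub_right_comm] at this
  obtain ⟨h₀, h₁⟩ := one_div_sin_sq_sub_one_div_sq_mem_Icc hx.1 h
  have h₂ : 0 < π - x := by linarith [hx.2]
  have h₃ : 1 / (π - x) ^ 2 ≤ 1 := by
    rw [div_le_one (by positivity)]
    nlinarith [pi_gt_three]
  rw [abs_le]
  constructor <;> linarith [one_div_pos.mpr (pow_pos h₂ 2)]

lemma exists_cscSqSum_sub_mem_Icc :
    ∃ B, ∀ x ∈ Ioo 0 π, cscSqSum x - 1 / x ^ 2 - 1 / (π - x) ^ 2 ∈ Icc 0 B := by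
  have hB : Summable fun n : ℕ ↦ 1 / (π + n * π) ^ 2 := by
    exact_mod_cast (summable_int_iff_summable_nat_and_neg.mp
      (summable_one_div_add_int_mul_sq pi_ne_zero π)).1
  refine ⟨∑' n : ℕ, 2 * (1 / (π + n * π) ^ 2), fun x ⟨hx₀, hxπ⟩ ↦ ?_⟩
  have htail := (hasSum_nat_add_iff' 1).mpr (hasSum_cscSqSum_nat x)
  simp only [Finset.range_one, Finset.sum_singleton, Nat.cast_zero, zero_mul, add_zero, zero_add,
    one_mul, Nat.cast_add, Nat.cast_one] at htail
  have hterm : ∀ n : ℕ, 1 / (x + (n + 1) * π) ^ 2 + 1 / ((n + 1 + 1) * π - x) ^ 2 ≤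
      2 * (1 / (π + n * π) ^ 2) := fun n ↦ by
    have h₀ : 0 < π + n * π := by positivity
    have h₁ := one_div_le_one_div_of_le (pow_pos h₀ 2)
      (pow_le_pow_left₀ h₀.le (by linarith : π + n * π ≤ x + (n + 1) * π) 2)
    have h₂ := one_div_le_one_div_of_le (pow_pos h₀ 2)
      (pow_le_pow_left₀ h₀.le (by linarith : π + n * π ≤ (n + 1 + 1) * π - x) 2)
    linarith
  rw [sub_sub]
  exact ⟨htail.nonneg fun n ↦ by positivity, hasSum_le hterm htail (hB.mul_left 2).hasSum⟩

lemma cscSqSum_eq_one_div_sin_sq {x : ℝ} (hx : x ∈ Ioo 0 π) : cscSqSum x = 1 / sin x ^ 2 := by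
  obtain ⟨B, hB⟩ := exists_cscSqSum_sub_mem_Icc
  have hbound : ∀ y ∈ Ioo 0 π, |cscSqSum y - 1 / sin y ^ 2| ≤ B + 1 := fun y hy ↦ by
    have h₁ := hB y hy
    have h₂ := abs_le.mp (abs_one_div_sin_sq_sub_le_one hy)
    rw [abs_le]
    constructor <;> linarith [h₁.1, h₁.2]
  refine sub_eq_zero.mp (eq_zero_of_abs_le_of_duplication hbound (fun y hy ↦ ?_) x hx)
  rw [cscSqSum_eq_duplication y,
    one_div_sin_sq_eq_duplication (sin_pos_of_pos_of_lt_pi hy.1 hy.2).ne']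
  ring

lemma integral_one_div_add_sq {a b c : ℝ} (h : ∀ x ∈ uIcc a b, x + c ≠ 0) :
    ∫ x in a..b, 1 / (x + c) ^ 2 = 1 / (a + c) - 1 / (b + c) := by
  have hderiv : ∀ x ∈ uIcc a b, HasDerivAt (fun y ↦ -(y + c)⁻¹) (1 / (x + c) ^ 2) x :=
    fun x hx ↦ (((hasDerivAt_id x).add_const c).inv (h x hx)).neg.congr_deriv
      (by simp only [id]; ring)
  have hcont : ContinuousOn (fun x ↦ 1 / (x + c) ^ 2) (uIcc a b) :=
    continuousOn_const.div (by fun_prop) fun x hx ↦ pow_ne_zero 2 (h x hx)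
  rw [integral_eq_sub_of_hasDerivAt hderiv hcont.intervalIntegrable]
  simp only [one_div]
  ring

lemma hasDerivAt_cot {x : ℝ} (hx : sin x ≠ 0) : HasDerivAt cot (-(1 / sin x ^ 2)) x := by
  have h := (hasDerivAt_cos x).fun_div (hasDerivAt_sin x) hx
  rw [← funext cot_eq_cos_div_sin] at h
  refine h.congr_deriv ?_
  field_simp
  linear_combination -sin_sq_add_cos_sq x

lemma integral_one_div_sin_sq {a b : ℝ} (h : ∀ x ∈ uIcc a b, sin x ≠ 0) :
    ∫ x in a..b, 1 / sin x ^ 2 = cot a - cot b := by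
  have hderiv : ∀ x ∈ uIcc a b, HasDerivAt (fun y ↦ -cot y) (1 / sin x ^ 2) x :=
    fun x hx ↦ (hasDerivAt_cot (h x hx)).neg.congr_deriv (neg_neg _)
  have hcont : ContinuousOn (fun x ↦ 1 / sin x ^ 2) (uIcc a b) :=
    continuousOn_const.div (by fun_prop) fun x hx ↦ pow_ne_zero 2 (h x hx)
  rw [integral_eq_sub_of_hasDerivAt hderiv hcont.intervalIntegrable]
  ring

lemma hasSum_cot_sub_cot {a b : ℝ} (ha : a ∈ Ioo 0 π) (hb : b ∈ Ioo 0 π) :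
    HasSum (fun k : ℤ ↦ 1 / (a + k * π) - 1 / (b + k * π)) (cot a - cot b) := by
  have hsub : uIcc a b ⊆ Ioo 0 π := ordConnected_Ioo.uIcc_subset ha hb
  have hsin : ∀ x ∈ uIcc a b, sin x ≠ 0 := fun x hx ↦
    (sin_pos_of_pos_of_lt_pi (hsub hx).1 (hsub hx).2).ne'
  have hcsc : ∀ x ∈ uIoc a b, cscSqSum x = 1 / sin x ^ 2 := fun x hx ↦
    cscSqSum_eq_one_div_sin_sq (hsub (uIoc_subset_uIcc hx))
  have hint : IntervalIntegrable cscSqSum volume a b := by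
    refine (intervalIntegrable_congr fun x hx ↦ (hcsc x hx).symm).mp ?_
    exact (continuousOn_const.div (by fun_prop) fun x hx ↦
      pow_ne_zero 2 (hsin x hx)).intervalIntegrable
  have h := hasSum_integral_of_dominated_convergence (μ := volume)
    (F := fun (k : ℤ) x ↦ 1 / (x + k * π) ^ 2) (f := fun x ↦ 1 / sin x ^ 2)
    (fun k x ↦ 1 / (x + k * π) ^ 2)
    (fun k ↦ (by fun_prop : Measurable fun x : ℝ ↦ 1 / (x + k * π) ^ 2).aestronglyMeasurable)
    (fun k ↦ ae_of_all _ fun x _ ↦ (Real.norm_of_nonneg (by positivity)).le)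
    (ae_of_all _ fun x _ ↦ summable_one_div_add_int_mul_sq pi_ne_zero x) hint
    (ae_of_all _ fun x hx ↦ hcsc x hx ▸ hasSum_cscSqSum x)
  rwa [integral_one_div_sin_sq hsin, funext fun k : ℤ ↦ integral_one_div_add_sq fun x hx ↦
    add_int_mul_pi_ne_zero (hsub hx) k] at h

lemma hasSum_one_div_sin {x : ℝ} (hx : x ∈ Ioo 0 π) :
    HasSum (fun k : ℤ ↦ 1 / (x + 2 * k * π) - 1 / (x + (2 * k + 1) * π)) (1 / sin x) := by
  obtain ⟨h₀, h₁⟩ := hx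
  have hs : sin (x / 2) ≠ 0 := (sin_pos_of_pos_of_lt_pi (by linarith) (by linarith)).ne'
  have hc : cos (x / 2) ≠ 0 := (cos_pos_of_mem_Ioo ⟨by linarith, by linarith⟩).ne'
  have h := (hasSum_cot_sub_cot (a := x / 2) (b := (x + π) / 2) ⟨by linarith, by linarith⟩
    ⟨by linarith, by linarith⟩).div_const 2
  have hval : (cot (x / 2) - cot ((x + π) / 2)) / 2 = 1 / sin x := by
    rw [show (x + π) / 2 = x / 2 + π / 2 by ring, cot_eq_cos_div_sin, cot_eq_cos_div_sin,
      sin_add_pi_div_two, cos_add_pi_div_two, sin_eq_two_mul_sin_half_mul_cos_half x]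
    field_simp
    linear_combination sin_sq_add_cos_sq (x / 2)
  refine hval ▸ h.congr_fun fun k ↦ ?_
  rw [show x + 2 * k * π = 2 * (x / 2 + k * π) by ring,
    show x + (2 * k + 1) * π = 2 * ((x + π) / 2 + k * π) by ring]
  generalize x / 2 + k * π = y
  generalize (x + π) / 2 + k * π = z
  ring

lemma sum_range_two_mul_neg_one_pow_mul {R : Type*} [CommRing R] (d : ℕ → R) (N : ℕ) :
    ∑ n ∈ Finset.range (2 * N), (-1) ^ n * d n =
      ∑ j ∈ Finset.range N, (d (2 * j) - d (2 * j + 1)) := by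
  induction N with
  | zero => simp
  | succ N ih =>
    rw [show 2 * (N + 1) = 2 * N + 1 + 1 by ring, Finset.sum_range_succ, Finset.sum_range_succ,
      Finset.sum_range_succ, ih, pow_succ, pow_mul, neg_one_sq, one_pow]
    ring

lemma Antitone.sum_range_neg_one_pow_mul_mem_Icc {d : ℕ → ℝ} (hd : Antitone d)
    (h₀ : ∀ n, 0 ≤ d n) (N : ℕ) : ∑ n ∈ Finset.range N, (-1) ^ n * d n ∈ Icc 0 (d 0) := by
  induction N generalizing d with
  | zero => simpa using h₀ 0
  | succ N ih =>
    obtain ⟨h₁, h₂⟩ := ih (d := fun n ↦ d (n + 1)) (fun m n h ↦ hd (by omega)) fun n ↦ h₀ _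
    have h₃ : d 1 ≤ d 0 := hd zero_le_one
    rw [Finset.sum_range_succ']
    simp only [pow_succ, mul_neg_one, neg_mul, Finset.sum_neg_distrib, pow_zero, one_mul] at h₂ ⊢
    constructor <;> linarith

noncomputable def cscTerm (x : ℝ) (n : ℕ) : ℝ := 1 / (x + n * π) + 1 / ((n + 1) * π - x)

lemma cscTerm_antitone {x : ℝ} (hx : x ∈ Ioo 0 π) : Antitone (cscTerm x) := by
  refine antitone_nat_of_succ_le fun n ↦ ?_
  have h₁ : 0 < x + n * π := by linarith [hx.1, show 0 ≤ n * π by positivity]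
  have h₂ : 0 < (n + 1) * π - x := by nlinarith [hx.2, show 0 ≤ n * π by positivity]
  unfold cscTerm
  push_cast
  gcongr <;> linarith [pi_pos]

lemma cscTerm_nonneg {x : ℝ} (hx : x ∈ Ioo 0 π) (n : ℕ) : 0 ≤ cscTerm x n := by
  have h₁ : 0 < x + n * π := by linarith [hx.1, show 0 ≤ n * π by positivity]
  have h₂ : 0 < (n + 1) * π - x := by nlinarith [hx.2, show 0 ≤ n * π by positivity]
  unfold cscTerm
  positivity

lemma tendsto_cscTerm (x : ℝ) : Tendsto (cscTerm x) atTop (𝓝 0) := by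
  have hn : Tendsto (fun n : ℕ ↦ (n : ℝ) * π) atTop atTop :=
    tendsto_natCast_atTop_atTop.atTop_mul_const pi_pos
  have h₁ := (tendsto_atTop_add_const_left _ x hn).inv_tendsto_atTop
  have h₂ := (tendsto_atTop_add_const_right _ (π - x) hn).inv_tendsto_atTop
  refine (add_zero (0 : ℝ) ▸ h₁.add h₂).congr fun n ↦ ?_
  simp only [cscTerm, Pi.inv_apply]
  ring

lemma tendsto_sum_neg_one_pow_mul_cscTerm {x : ℝ} (hx : x ∈ Ioo 0 π) :
    Tendsto (fun N ↦ ∑ n ∈ Finset.range N, (-1) ^ n * cscTerm x n) atTop (𝓝 (1 / sin x)) := by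
  obtain ⟨l, hl⟩ := (cscTerm_antitone hx).tendsto_alternating_series_of_tendsto_zero
    (tendsto_cscTerm x)
  have heven : Tendsto (fun N ↦ ∑ n ∈ Finset.range (2 * N), (-1) ^ n * cscTerm x n) atTop
      (𝓝 (1 / sin x)) := by
    refine ((hasSum_one_div_sin hx).nat_add_neg_add_one.tendsto_sum_nat).congr fun N ↦ ?_
    rw [sum_range_two_mul_neg_one_pow_mul]
    refine Finset.sum_congr rfl fun j _ ↦ ?_
    simp only [cscTerm]
    push_cast
    rw [show x + 2 * (-(j + 1 : ℝ)) * π = -((2 * j + 1 + 1) * π - x) by ring,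
      show x + (2 * (-(j + 1 : ℝ)) + 1) * π = -((2 * j + 1) * π - x) by ring]
    simp only [one_div, inv_neg]
    ring
  have htwo : Tendsto (fun N : ℕ ↦ 2 * N) atTop atTop :=
    tendsto_id.const_mul_atTop' two_pos
  rwa [tendsto_nhds_unique (hl.comp htwo) heven] at hl

noncomputable def foldedKernel (k : ℝ → ℝ) (N : ℕ) (x : ℝ) : ℝ :=
  ∑ n ∈ Finset.range N, (k (x + n * π) + k ((n + 1) * π - x))

section Folding

variable {f k : ℝ → ℝ}

lemma apply_add_nat_mul_pi (hper : ∀ x, 0 ≤ x → f (x + π) = f x) (n : ℕ) {x : ℝ} (hx : 0 ≤ x) :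
    f (x + n * π) = f x := by
  induction n with
  | zero => simp
  | succ n ih =>
    rw [Nat.cast_succ, add_one_mul, ← add_assoc, hper _ (by positivity), ih]

lemma intervalIntegrable_comp_add_right_of_forall
    (hk : ∀ a b, IntervalIntegrable k volume a b) (c a b : ℝ) :
    IntervalIntegrable (fun x ↦ k (x + c)) volume a b := by
  simpa using (hk (a + c) (b + c)).comp_add_right c

lemma intervalIntegrable_comp_sub_left_of_forall
    (hk : ∀ a b, IntervalIntegrable k volume a b) (c a b : ℝ) :
    IntervalIntegrable (fun x ↦ k (c - x)) volume a b := by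
  simpa using (hk (c - a) (c - b)).comp_sub_left c

lemma two_mul_integral_period (hf : Continuous f) (hper : ∀ x, 0 ≤ x → f (x + π) = f x)
    (hsym : ∀ x, 0 ≤ x → f (π - x) = f x) (hk : ∀ a b, IntervalIntegrable k volume a b) (n : ℕ) :
    2 * ∫ x in n * π..(n + 1) * π, k x * f x =
      ∫ x in (0 : ℝ)..π, (k (x + n * π) + k ((n + 1) * π - x)) * f x := by
  have hA : ∫ x in n * π..(n + 1) * π, k x * f x = ∫ x in (0 : ℝ)..π, k (x + n * π) * f x :=
    calc ∫ x in n * π..(n + 1) * π, k x * f x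
        = ∫ x in (0 : ℝ)..π, k (x + n * π) * f (x + n * π) := by
          rw [integral_comp_add_right (fun x ↦ k x * f x)]
          congr 1 <;> ring
      _ = ∫ x in (0 : ℝ)..π, k (x + n * π) * f x := integral_congr fun x hx ↦ by
          rw [uIcc_of_le pi_pos.le] at hx
          simp only [apply_add_nat_mul_pi hper n hx.1]
  have hB : ∫ x in n * π..(n + 1) * π, k x * f x =
      ∫ x in (0 : ℝ)..π, k ((n + 1) * π - x) * f x :=
    calc ∫ x in n * π..(n + 1) * π, k x * f x
        = ∫ x in (0 : ℝ)..π, k ((n + 1) * π - x) * f ((n + 1) * π - x) := by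
          rw [integral_comp_sub_left (fun x ↦ k x * f x)]
          congr 1 <;> ring
      _ = ∫ x in (0 : ℝ)..π, k ((n + 1) * π - x) * f x := integral_congr fun x hx ↦ by
          rw [uIcc_of_le pi_pos.le] at hx
          rw [show (n + 1) * π - x = π - x + n * π by ring,
            apply_add_nat_mul_pi hper n (by linarith [hx.2]), hsym x hx.1]
  rw [two_mul]
  nth_rewrite 1 [hA]
  rw [hB, ← intervalIntegral.integral_add]
  · simp only [add_mul]
  · exact (intervalIntegrable_comp_add_right_of_forall hk _ 0 π).mul_continuousOn hf.continuousOn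
  · exact (intervalIntegrable_comp_sub_left_of_forall hk _ 0 π).mul_continuousOn hf.continuousOn

lemma intervalIntegrable_foldedKernel_term_mul (hf : Continuous f)
    (hk : ∀ a b, IntervalIntegrable k volume a b) (n : ℕ) (a b : ℝ) :
    IntervalIntegrable (fun x ↦ (k (x + n * π) + k ((n + 1) * π - x)) * f x) volume a b :=
  ((intervalIntegrable_comp_add_right_of_forall hk _ a b).add
    (intervalIntegrable_comp_sub_left_of_forall hk _ a b)).mul_continuousOn hf.continuousOn

lemma intervalIntegrable_foldedKernel_mul (hf : Continuous f)
    (hk : ∀ a b, IntervalIntegrable k volume a b) (N : ℕ) (a b : ℝ) :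
    IntervalIntegrable (fun x ↦ foldedKernel k N x * f x) volume a b := by
  rw [show (fun x ↦ foldedKernel k N x * f x) =
      ∑ n ∈ Finset.range N, fun x ↦ (k (x + n * π) + k ((n + 1) * π - x)) * f x by
    ext x
    simp only [foldedKernel, Finset.sum_mul, Finset.sum_apply]]
  exact IntervalIntegrable.sum _ fun n _ ↦ intervalIntegrable_foldedKernel_term_mul hf hk n a b

lemma two_mul_integral_eq_integral_foldedKernel_mul (hf : Continuous f)
    (hper : ∀ x, 0 ≤ x → f (x + π) = f x) (hsym : ∀ x, 0 ≤ x → f (π - x) = f x)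
    (hk : ∀ a b, IntervalIntegrable k volume a b) (N : ℕ) :
    2 * ∫ x in (0 : ℝ)..N * π, k x * f x = ∫ x in (0 : ℝ)..π, foldedKernel k N x * f x := by
  have hsplit := sum_integral_adjacent_intervals (f := fun x ↦ k x * f x) (μ := volume)
    (a := fun n : ℕ ↦ n * π) (n := N) fun _ _ ↦ (hk _ _).mul_continuousOn hf.continuousOn
  simp only [Nat.cast_zero, zero_mul, Nat.cast_succ] at hsplit
  rw [← hsplit, Finset.mul_sum]
  simp only [two_mul_integral_period hf hper hsym hk, foldedKernel, Finset.sum_mul]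
  exact (integral_finsetSum fun n _ ↦ intervalIntegrable_foldedKernel_term_mul hf hk n 0 π).symm

lemma tendsto_integral_mul_of_foldedKernel (hf : Continuous f)
    (hper : ∀ x, 0 ≤ x → f (x + π) = f x) (hsym : ∀ x, 0 ≤ x → f (π - x) = f x)
    (hk : ∀ a b, IntervalIntegrable k volume a b) {C : ℝ}
    (hbound : ∀ N, ∀ x ∈ Ioo 0 π, |foldedKernel k N x| ≤ C)
    (hlim : ∀ x ∈ Ioo 0 π, Tendsto (fun N ↦ foldedKernel k N x) atTop (𝓝 1)) :
    Tendsto (fun N : ℕ ↦ ∫ x in (0 : ℝ)..N * π, k x * f x) atTop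
      (𝓝 ((∫ x in (0 : ℝ)..π, f x) / 2)) := by
  have hIoo : ∀ᵐ x, x ∈ uIoc 0 π → x ∈ Ioo 0 π := by
    filter_upwards [volume.ae_ne π] with x hne hx
    rw [uIoc_of_le pi_pos.le] at hx
    exact ⟨hx.1, hx.2.lt_of_ne hne⟩
  have h := intervalIntegral.tendsto_integral_filter_of_dominated_convergence (μ := volume)
    (l := atTop) (F := fun N x ↦ foldedKernel k N x * f x) (fun x ↦ C * |f x|)
    (Eventually.of_forall fun N ↦
      (intervalIntegrable_foldedKernel_mul hf hk N 0 π).def'.aestronglyMeasurable)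
    (Eventually.of_forall fun N ↦ by
      filter_upwards [hIoo] with x hx hx'
      rw [norm_mul, Real.norm_eq_abs, Real.norm_eq_abs]
      exact mul_le_mul_of_nonneg_right (hbound N x (hx hx')) (abs_nonneg _))
    ((hf.abs.const_mul C).intervalIntegrable 0 π)
    (by
      filter_upwards [hIoo] with x hx hx'
      simpa using (hlim x (hx hx')).mul_const (f x))
  refine (h.div_const 2).congr fun N ↦ ?_
  rw [← two_mul_integral_eq_integral_foldedKernel_mul hf hper hsym hk,
    mul_div_cancel_left₀ _ two_ne_zero]

end Folding

lemma intervalIntegrable_sin_div (a b : ℝ) :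
    IntervalIntegrable (fun x ↦ sin x / x) volume a b := by
  refine (continuous_sinc.intervalIntegrable a b).congr_ae (ae_restrict_of_ae ?_)
  filter_upwards [volume.ae_ne 0] with x hx using sinc_of_ne_zero hx

lemma intervalIntegrable_sin_div_sq (a b : ℝ) :
    IntervalIntegrable (fun x ↦ (sin x / x) ^ 2) volume a b := by
  refine ((continuous_sinc.pow 2).intervalIntegrable a b).congr_ae (ae_restrict_of_ae ?_)
  filter_upwards [volume.ae_ne 0] with x hx using by rw [Pi.pow_apply, sinc_of_ne_zero hx]

lemma sin_nat_add_one_mul_pi_sub (x : ℝ) (n : ℕ) : sin ((n + 1) * π - x) = (-1) ^ n * sin x := by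
  rw [show ((n : ℝ) + 1) * π - x = ((n + 1 : ℕ) : ℝ) * π - x by push_cast; ring,
    sin_nat_mul_pi_sub, pow_succ]
  ring

lemma foldedKernel_sin_div_sq (x : ℝ) (N : ℕ) :
    foldedKernel (fun x ↦ (sin x / x) ^ 2) N x =
      ∑ n ∈ Finset.range N, sin x ^ 2 * (1 / (x + n * π) ^ 2 + 1 / ((n + 1) * π - x) ^ 2) := by
  refine Finset.sum_congr rfl fun n _ ↦ ?_
  dsimp only
  rw [sin_add_nat_mul_pi, sin_nat_add_one_mul_pi_sub, div_pow, div_pow, mul_pow, ← pow_mul,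
    pow_mul', neg_one_sq, one_pow, one_mul]
  ring

lemma hasSum_sin_sq_mul_cscSqSum {x : ℝ} (hx : x ∈ Ioo 0 π) :
    HasSum (fun n : ℕ ↦ sin x ^ 2 * (1 / (x + n * π) ^ 2 + 1 / ((n + 1) * π - x) ^ 2)) 1 := by
  have h := (hasSum_cscSqSum_nat x).mul_left (sin x ^ 2)
  rwa [cscSqSum_eq_one_div_sin_sq hx, mul_one_div_cancel
    (pow_ne_zero 2 (sin_pos_of_pos_of_lt_pi hx.1 hx.2).ne')] at h

lemma abs_foldedKernel_sin_div_sq_le (N : ℕ) {x : ℝ} (hx : x ∈ Ioo 0 π) :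
    |foldedKernel (fun x ↦ (sin x / x) ^ 2) N x| ≤ 1 := by
  rw [foldedKernel_sin_div_sq, abs_of_nonneg (Finset.sum_nonneg fun n _ ↦ by positivity)]
  exact sum_le_hasSum _ (fun n _ ↦ by positivity) (hasSum_sin_sq_mul_cscSqSum hx)

lemma tendsto_foldedKernel_sin_div_sq {x : ℝ} (hx : x ∈ Ioo 0 π) :
    Tendsto (fun N ↦ foldedKernel (fun x ↦ (sin x / x) ^ 2) N x) atTop (𝓝 1) := by
  simpa only [foldedKernel_sin_div_sq] using (hasSum_sin_sq_mul_cscSqSum hx).tendsto_sum_nat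

lemma foldedKernel_sin_div (x : ℝ) (N : ℕ) :
    foldedKernel (fun x ↦ sin x / x) N x =
      sin x * ∑ n ∈ Finset.range N, (-1) ^ n * cscTerm x n := by
  rw [Finset.mul_sum]
  refine Finset.sum_congr rfl fun n _ ↦ ?_
  dsimp only
  rw [sin_add_nat_mul_pi, sin_nat_add_one_mul_pi_sub, cscTerm]
  ring

lemma abs_foldedKernel_sin_div_le (N : ℕ) {x : ℝ} (hx : x ∈ Ioo 0 π) :
    |foldedKernel (fun x ↦ sin x / x) N x| ≤ 2 := by
  obtain ⟨h₀, h₁⟩ := hx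
  have hs : 0 < sin x := sin_pos_of_pos_of_lt_pi h₀ h₁
  obtain ⟨hlo, hhi⟩ := (cscTerm_antitone ⟨h₀, h₁⟩).sum_range_neg_one_pow_mul_mem_Icc
    (cscTerm_nonneg ⟨h₀, h₁⟩) N
  have hsx : sin x / x ≤ 1 := (div_le_one h₀).mpr (sin_le h₀.le)
  have hsπx : sin x / (π - x) ≤ 1 := (div_le_one (by linarith)).mpr (by
    simpa [sin_pi_sub] using sin_le (x := π - x) (by linarith))
  have h0 : sin x * cscTerm x 0 = sin x / x + sin x / (π - x) := by
    simp [cscTerm, mul_add, div_eq_mul_inv]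
  rw [foldedKernel_sin_div, abs_of_nonneg (mul_nonneg hs.le hlo)]
  linarith [mul_le_mul_of_nonneg_left hhi hs.le]

lemma tendsto_foldedKernel_sin_div {x : ℝ} (hx : x ∈ Ioo 0 π) :
    Tendsto (fun N ↦ foldedKernel (fun x ↦ sin x / x) N x) atTop (𝓝 1) := by
  have h := (tendsto_sum_neg_one_pow_mul_cscTerm hx).const_mul (sin x)
  rw [mul_one_div_cancel (sin_pos_of_pos_of_lt_pi hx.1 hx.2).ne'] at h
  simpa only [foldedKernel_sin_div] using h

/-- If `f` is continuous, `π`-periodic and symmetric about `π/2` on `[0, ∞)`, and both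
improper integrals `∫₀^∞ (sin² x / x²) f x dx` and `∫₀^∞ (sin x / x) f x dx` exist,
then they are equal. -/
theorem integral_sin_sq_eq_integral_sin (f : ℝ → ℝ) (hf : Continuous f)
    (hper : ∀ x : ℝ, 0 ≤ x → f (x + π) = f x)
    (hsym : ∀ x : ℝ, 0 ≤ x → f (π - x) = f x)
    (I₂ I₁ : ℝ)
    (hI₂ : Tendsto (fun T : ℝ => ∫ x in (0:ℝ)..T, (Real.sin x / x) ^ 2 * f x)
      atTop (nhds I₂))
    (hI₁ : Tendsto (fun T : ℝ => ∫ x in (0:ℝ)..T, (Real.sin x / x) * f x)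
      atTop (nhds I₁)) :
    I₂ = I₁ := by
  have hNπ : Tendsto (fun N : ℕ ↦ (N : ℝ) * π) atTop atTop :=
    tendsto_natCast_atTop_atTop.atTop_mul_const pi_pos
  have h₂ := tendsto_integral_mul_of_foldedKernel hf hper hsym intervalIntegrable_sin_div_sq
    (fun N _ ↦ abs_foldedKernel_sin_div_sq_le N) fun _ ↦ tendsto_foldedKernel_sin_div_sq
  have h₁ := tendsto_integral_mul_of_foldedKernel hf hper hsym intervalIntegrable_sin_div
    (fun N _ ↦ abs_foldedKernel_sin_div_le N) fun _ ↦ tendsto_foldedKernel_sin_div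
  exact (tendsto_nhds_unique (hI₂.comp hNπ) h₂).trans (tendsto_nhds_unique (hI₁.comp hNπ) h₁).symm
end

section
/- For every real α that is not an integer multiple of π, one has 1/sin α = 1/α + Σ_{m=1}^∞ (−1)^m (1/(α − mπ) + 1/(α + mπ)), where the series converges. -/
/-!
Since `1 / sin α = cot (α / 2) - cot α`, the expansion follows from the Mittag-Leffler series
`cot α = 1 / α + ∑ₘ (1 / (α - mπ) + 1 / (α + mπ))` applied at `α / 2` and at `α`: the series
at `α / 2` is twice the part of the series at `α` over even `m`, and twice the even part minus
the whole series is the alternating series.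
-/

open Real

theorem HasSum.neg_one_pow_succ_mul {R : Type*} [NormedRing R] [CompleteSpace R] {f : ℕ → R}
    {a b : R} (hf : HasSum f a) (hodd : HasSum (fun k => f (2 * k + 1)) b) :
    HasSum (fun n => (-1) ^ (n + 1) * f n) (2 * b - a) := by
  obtain ⟨c, heven⟩ : Summable fun k => f (2 * k) :=
    hf.summable.comp_injective (mul_right_injective₀ (two_ne_zero' ℕ))
  have hc : c = a - b := eq_sub_of_add_eq ((heven.even_add_odd hodd).unique hf)
  rw [show 2 * b - a = -c + b by rw [hc]; noncomm_ring]
  refine HasSum.even_add_odd ?_ ?_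
  · simpa [pow_succ] using heven.neg
  · simpa [pow_succ] using hodd

theorem Real.cot_half_sub_cot {x : ℝ} (hx : sin x ≠ 0) : cot (x / 2) - cot x = 1 / sin x := by
  obtain ⟨y, rfl⟩ : ∃ y, x = 2 * y := ⟨x / 2, by ring⟩
  rw [sin_two_mul] at hx
  have hs : sin y ≠ 0 := right_ne_zero_of_mul (left_ne_zero_of_mul hx)
  have hc : cos y ≠ 0 := right_ne_zero_of_mul hx
  rw [mul_div_cancel_left₀ y two_ne_zero, cot_eq_cos_div_sin, cot_eq_cos_div_sin, cos_two_mul,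
    sin_two_mul]
  field_simp
  ring

noncomputable def cotPolePair (α : ℝ) (m : ℕ) : ℝ :=
  1 / (α - (m + 1 : ℕ) * π) + 1 / (α + (m + 1 : ℕ) * π)

theorem cotPolePair_half (α : ℝ) (m : ℕ) :
    cotPolePair (α / 2) m = 2 * cotPolePair α (2 * m + 1) := by
  simp only [cotPolePair]
  push_cast
  rw [show α / 2 - (m + 1) * π = (α - (2 * m + 1 + 1) * π) / 2 by ring,
    show α / 2 + (m + 1) * π = (α + (2 * m + 1 + 1) * π) / 2 by ring, one_div_div, one_div_div]
  ring

theorem hasSum_cotPolePair {α : ℝ} (hα : ∀ k : ℤ, α ≠ k * π) :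
    HasSum (cotPolePair α) (cot α - 1 / α) := by
  have hπ : (π : ℂ) ≠ 0 := by exact_mod_cast pi_ne_zero
  have hx : (α / π : ℂ) ∈ Complex.integerComplement := by
    rintro ⟨k, hk⟩
    refine hα k ?_
    rw [eq_div_iff hπ] at hk
    exact_mod_cast hk.symm
  have h := ((summable_cotTerm hx).hasSum_iff_tendsto_nat.mpr
    (tendsto_logDeriv_euler_cot_sub hx)).div_const π
  have hterm : (fun m => cotTerm (α / π) m / π) = fun m => (cotPolePair α m : ℂ) := by
    ext m
    simp only [cotPolePair, cotTerm]
    push_cast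
    field_simp
  have hsum : (π * Complex.cot (π * (α / π)) - 1 / (α / π)) / π = (cot α - 1 / α : ℝ) := by
    rw [mul_div_cancel₀ _ hπ]
    push_cast
    field_simp
  rw [hterm, hsum] at h
  exact Complex.hasSum_ofReal.mp h

/-- Partial fraction expansion of `1 / sin α`: for `α` not an integer multiple of `π`,
`1 / sin α = 1/α + ∑_{m=1}^∞ (-1)^m (1/(α - mπ) + 1/(α + mπ))`. -/
theorem one_div_sin_eq_sum (α : ℝ) (hα : ∀ k : ℤ, α ≠ k * π) :
    HasSum
      (fun m : ℕ => (-1 : ℝ) ^ (m + 1) *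
        (1 / (α - (m + 1 : ℕ) * π) + 1 / (α + (m + 1 : ℕ) * π)))
      (1 / Real.sin α - 1 / α) := by
  have hsin : sin α ≠ 0 := fun h => by
    obtain ⟨k, hk⟩ := sin_eq_zero_iff.mp h
    exact hα k hk.symm
  have hhalf : HasSum (fun k => 2 * cotPolePair α (2 * k + 1)) (cot (α / 2) - 1 / (α / 2)) := by
    simp only [← cotPolePair_half]
    exact hasSum_cotPolePair fun k h => hα (2 * k) (by push_cast; linarith)
  have hodd : HasSum (fun k => cotPolePair α (2 * k + 1)) ((cot (α / 2) - 1 / (α / 2)) / 2) := by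
    simpa using hhalf.div_const 2
  have hvalue : 2 * ((cot (α / 2) - 1 / (α / 2)) / 2) - (cot α - 1 / α) = 1 / sin α - 1 / α := by
    rw [← cot_half_sub_cot hsin]
    ring
  exact hvalue ▸ (hasSum_cotPolePair hα).neg_one_pow_succ_mul hodd
end

section
/- Let n be a positive integer and let f : ℝ → ℝ be a continuous function satisfying f(x + π) = f(x) and f(π − x) = f(x) for all x ≥ 0, such that the improper integral ∫₀^∞ (sin^{2n+1}x / x) f(x) dx exists. Then ∫₀^∞ (sin^{2n+1}x / x) f(x) dx = ∫₀^{π/2} sin^{2n}x · f(x) dx. -/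
/-!
With `g = sin^{2n} · f`, which is again `π`-periodic and symmetric about `π/2`, the integrand is
`(sin x / x) · g x`, so this is Lobachevsky's integral formula. Cutting `[0, Nπ]` into periods
turns `∫₀^{Nπ} (sin x / x) g x` into `∫₀^π sin x · g x · ∑_{k<N} (-1)^k / (x + kπ)`, and
symmetrising under `x ↦ π - x` replaces the kernel by a partial sum of the expansion
`1 / sin x = ∑_{k ∈ ℤ} (-1)^k / (x + kπ)`. Since `∑_{k<N} (-1)^k / (a + k)` is
`∫₀¹ t^(a-1) / (1 + t) dt` up to an error `1 / (a + N)`, and the sum of these integrals at `a`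
and `1 - a` is the Beta integral `B(a, 1 - a) = π / sin (π a)`, the partial sums converge to
`1 / sin x` uniformly at rate `O(1/N)`, and the integrals converge to
`½ ∫₀^π g = ∫₀^{π/2} g`.
-/

open Real Filter MeasureTheory intervalIntegral Set Topology
open scoped Interval

lemma integral_rpow_mul_one_sub_rpow_eq_pi_div_sin {a : ℝ} (ha : a ∈ Ioo (0 : ℝ) 1) :
    ∫ x in (0 : ℝ)..1, x ^ (a - 1) * (1 - x) ^ (-a) = π / sin (π * a) := by
  have hbeta : Complex.betaIntegral a (1 - a) =
      ↑(∫ x in (0 : ℝ)..1, x ^ (a - 1) * (1 - x) ^ (-a)) := by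
    rw [Complex.betaIntegral, ← intervalIntegral.integral_ofReal]
    refine integral_congr fun x hx => ?_
    rw [uIcc_of_le zero_le_one] at hx
    rw [Complex.ofReal_mul, Complex.ofReal_cpow hx.1, Complex.ofReal_cpow (sub_nonneg.2 hx.2)]
    push_cast
    ring_nf
  have hGamma := Complex.Gamma_mul_Gamma_eq_betaIntegral (s := a) (t := 1 - a)
    (by simpa using ha.1) (by simpa using ha.2)
  rw [add_sub_cancel, Complex.Gamma_one, one_mul, Complex.Gamma_mul_Gamma_one_sub, hbeta]
    at hGamma
  exact_mod_cast hGamma.symm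

lemma integral_rpow_mul_one_sub_rpow_eq_integral_rpow_div_one_add (b : ℝ) :
    ∫ x in (0 : ℝ)..1 / 2, x ^ (b - 1) * (1 - x) ^ (-b) =
      ∫ t in (0 : ℝ)..1, t ^ (b - 1) / (1 + t) := by
  have himage : (fun t : ℝ => t / (1 + t)) '' Ioo 0 1 = Ioo 0 (1 / 2) := by
    ext x
    constructor
    · rintro ⟨t, ⟨ht0, ht1⟩, rfl⟩
      exact ⟨by positivity, by rw [div_lt_iff₀ (by positivity)]; linarith⟩
    · rintro ⟨hx0, hx1⟩
      refine ⟨x / (1 - x), ⟨by apply div_pos <;> linarith,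
        by rw [div_lt_one (by linarith)]; linarith⟩, ?_⟩
      have : 1 - x ≠ 0 := by linarith
      field_simp
      ring
  have hderiv : ∀ t ∈ Ioo (0 : ℝ) 1,
      HasDerivWithinAt (fun t : ℝ => t / (1 + t)) (((1 + t) ^ 2)⁻¹) (Ioo 0 1) t := by
    intro t ht
    have h1 : (1 : ℝ) + t ≠ 0 := by linarith [ht.1]
    refine (((hasDerivAt_id' t).div ((hasDerivAt_id' t).const_add 1) h1).congr_deriv
      ?_).hasDerivWithinAt
    field_simp
    ring
  have hinj : InjOn (fun t : ℝ => t / (1 + t)) (Ioo 0 1) := by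
    intro s hs t ht hst
    have : (1 : ℝ) + s ≠ 0 := by linarith [hs.1]
    have : (1 : ℝ) + t ≠ 0 := by linarith [ht.1]
    field_simp at hst
    linarith
  rw [integral_of_le (by norm_num), integral_of_le zero_le_one, integral_Ioc_eq_integral_Ioo,
    integral_Ioc_eq_integral_Ioo, ← himage,
    integral_image_eq_integral_abs_deriv_smul measurableSet_Ioo hderiv hinj]
  refine setIntegral_congr_fun measurableSet_Ioo fun t ⟨ht0, _⟩ => ?_
  have h1t : (0 : ℝ) < 1 + t := by linarith
  have hsub : 1 - t / (1 + t) = (1 + t)⁻¹ := by field_simp; ring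
  simp only [smul_eq_mul]
  rw [hsub, abs_of_pos (by positivity), div_rpow ht0.le h1t.le, inv_rpow h1t.le,
    ← rpow_neg h1t.le, neg_neg, rpow_sub_one h1t.ne']
  field_simp

lemma integral_rpow_div_one_add_add_integral_rpow_div_one_add {a : ℝ} (ha : a ∈ Ioo (0 : ℝ) 1) :
    (∫ t in (0 : ℝ)..1, t ^ (a - 1) / (1 + t)) + ∫ t in (0 : ℝ)..1, t ^ (1 - a - 1) / (1 + t) =
      π / sin (π * a) := by
  set B : ℝ → ℝ := fun x => x ^ (a - 1) * (1 - x) ^ (-a)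
  have hB := integral_rpow_mul_one_sub_rpow_eq_pi_div_sin ha
  -- the Beta integral is nonzero, hence (by the junk-value convention) integrable
  have hint : IntervalIntegrable B volume 0 1 := by
    refine intervalIntegrable_of_integral_ne_zero ?_
    rw [hB]
    exact (div_pos pi_pos (sin_pos_of_pos_of_lt_pi (by nlinarith [ha.1, pi_pos])
      (by nlinarith [ha.2, pi_pos]))).ne'
  have hhalf : (1 / 2 : ℝ) ∈ [[0, 1]] := by rw [uIcc_of_le zero_le_one]; norm_num
  have hsplit := integral_add_adjacent_intervals
    (hint.mono_set (uIcc_subset_uIcc left_mem_uIcc hhalf))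
    (hint.mono_set (uIcc_subset_uIcc hhalf right_mem_uIcc))
  have hreflect : ∫ x in (1 / 2 : ℝ)..1, B x =
      ∫ x in (0 : ℝ)..1 / 2, x ^ (1 - a - 1) * (1 - x) ^ (-(1 - a)) := by
    have h := integral_comp_sub_left (a := 0) (b := 1 / 2) B 1
    norm_num only at h
    rw [← h]
    refine integral_congr fun x _ => ?_
    simp only [B, sub_sub_cancel]
    ring_nf
  rw [← integral_rpow_mul_one_sub_rpow_eq_integral_rpow_div_one_add,
    ← integral_rpow_mul_one_sub_rpow_eq_integral_rpow_div_one_add, ← hreflect, hsplit, hB]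

lemma intervalIntegrable_rpow_div_one_add {c : ℝ} (hc : -1 < c) :
    IntervalIntegrable (fun t => t ^ c / (1 + t)) volume 0 1 := by
  simp only [div_eq_mul_inv]
  refine (intervalIntegrable_rpow' hc).mul_continuousOn
    ((continuousOn_const.add continuousOn_id).inv₀ fun t ht => ?_)
  rw [uIcc_of_le zero_le_one] at ht
  exact (by linarith [ht.1] : (0 : ℝ) < 1 + t).ne'

lemma integral_rpow_div_one_add_sub_sum {a : ℝ} (ha : 0 < a) (N : ℕ) :
    (∫ t in (0 : ℝ)..1, t ^ (a - 1) / (1 + t)) - ∑ k ∈ Finset.range N, (-1) ^ k / (a + k) =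
      (-1) ^ N * ∫ t in (0 : ℝ)..1, t ^ (a - 1 + N) / (1 + t) := by
  have hexp (k : ℕ) : -1 < a - 1 + k := by linarith [k.cast_nonneg (α := ℝ)]
  have hsum : ∑ k ∈ Finset.range N, (-1) ^ k / (a + k) =
      ∫ t in (0 : ℝ)..1, ∑ k ∈ Finset.range N, (-1) ^ k * t ^ (a - 1 + k) := by
    rw [integral_finsetSum fun k _ => (intervalIntegrable_rpow' (hexp k)).const_mul _]
    refine Finset.sum_congr rfl fun k _ => ?_
    rw [intervalIntegral.integral_const_mul, integral_rpow (Or.inl (hexp k)), one_rpow,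
      zero_rpow (by linarith [hexp k])]
    ring_nf
  have hsum_int : IntervalIntegrable
      (fun t => ∑ k ∈ Finset.range N, (-1) ^ k * t ^ (a - 1 + k)) volume 0 1 := by
    simpa only [Finset.sum_fn] using IntervalIntegrable.sum (Finset.range N)
      (f := fun k t => (-1) ^ k * t ^ (a - 1 + k))
      fun k _ => (intervalIntegrable_rpow' (hexp k)).const_mul _
  rw [hsum, ← integral_sub (intervalIntegrable_rpow_div_one_add (by linarith)) hsum_int,
    ← intervalIntegral.integral_const_mul]
  refine integral_congr_ae (ae_of_all _ fun t ht => ?_)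
  rw [uIoc_of_le zero_le_one] at ht
  have h1t : 1 + t ≠ 0 := by linarith [ht.1]
  simp only [rpow_add ht.1, rpow_natCast, mul_left_comm _ (t ^ (a - 1)), ← Finset.mul_sum,
    ← mul_pow]
  have hgeom : ∑ i ∈ Finset.range N, (-1 * t) ^ i = (1 - (-1 * t) ^ N) / (1 + t) :=
    eq_div_of_mul_eq h1t (by rw [← mul_neg_geom_sum]; ring)
  rw [hgeom]
  field_simp
  ring

lemma abs_integral_rpow_div_one_add_sub_sum_le {a : ℝ} (ha : 0 < a) (N : ℕ) :
    |(∫ t in (0 : ℝ)..1, t ^ (a - 1) / (1 + t)) - ∑ k ∈ Finset.range N, (-1) ^ k / (a + k)| ≤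
      1 / (a + N) := by
  have hexp : -1 < a - 1 + N := by linarith [N.cast_nonneg (α := ℝ)]
  rw [integral_rpow_div_one_add_sub_sum ha, abs_mul, abs_pow, abs_neg, abs_one, one_pow, one_mul,
    abs_of_nonneg (integral_nonneg zero_le_one fun t ht =>
      div_nonneg (rpow_nonneg ht.1 _) (by linarith [ht.1]))]
  calc ∫ t in (0 : ℝ)..1, t ^ (a - 1 + N) / (1 + t)
      ≤ ∫ t in (0 : ℝ)..1, t ^ (a - 1 + N) :=
        integral_mono_on zero_le_one (intervalIntegrable_rpow_div_one_add hexp)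
          (intervalIntegrable_rpow' hexp) fun t ht =>
            div_le_self (rpow_nonneg ht.1 _) (by linarith [ht.1])
    _ = 1 / (a + N) := by
        rw [integral_rpow (Or.inl hexp), one_rpow, zero_rpow (by linarith)]
        ring_nf

/-- `cscPartialSum N x + cscPartialSum N (π - x)` is a partial sum of the partial-fraction
expansion `1 / sin x = ∑_{k ∈ ℤ} (-1) ^ k / (x + k π)`. -/
noncomputable def cscPartialSum (N : ℕ) (x : ℝ) : ℝ :=
  ∑ k ∈ Finset.range N, (-1) ^ k / (x + k * π)

lemma cscPartialSum_eq (N : ℕ) (x : ℝ) :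
    cscPartialSum N x = π⁻¹ * ∑ k ∈ Finset.range N, (-1) ^ k / (x / π + k) := by
  rw [cscPartialSum, Finset.mul_sum]
  refine Finset.sum_congr rfl fun k _ => ?_
  rw [show x / π + k = (x + k * π) / π by field_simp, div_div_eq_mul_div]
  field_simp

lemma abs_cscPartialSum_add_cscPartialSum_pi_sub_sub_le {x : ℝ} (hx : x ∈ Ioo 0 π) {N : ℕ}
    (hN : 0 < N) :
    |cscPartialSum N x + cscPartialSum N (π - x) - 1 / sin x| ≤ 2 / (π * N) := by
  set a := x / π
  have ha : a ∈ Ioo 0 1 := ⟨div_pos hx.1 pi_pos, (div_lt_one pi_pos).2 hx.2⟩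
  have hN' : (0 : ℝ) < N := Nat.cast_pos.2 hN
  have hcsc : 1 / sin x = π⁻¹ * ((∫ t in (0 : ℝ)..1, t ^ (a - 1) / (1 + t)) +
      ∫ t in (0 : ℝ)..1, t ^ (1 - a - 1) / (1 + t)) := by
    rw [integral_rpow_div_one_add_add_integral_rpow_div_one_add ha, mul_div_cancel₀ _ pi_ne_zero]
    field_simp
  have hremainder {b : ℝ} (hb : 0 < b) :
      |(∫ t in (0 : ℝ)..1, t ^ (b - 1) / (1 + t)) - ∑ k ∈ Finset.range N, (-1) ^ k / (b + k)| ≤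
        1 / N :=
    (abs_integral_rpow_div_one_add_sub_sum_le hb N).trans
      (one_div_le_one_div_of_le hN' (by linarith))
  rw [cscPartialSum_eq, cscPartialSum_eq, sub_div, div_self pi_ne_zero, hcsc]
  set J₁ := ∫ t in (0 : ℝ)..1, t ^ (a - 1) / (1 + t)
  set J₂ := ∫ t in (0 : ℝ)..1, t ^ (1 - a - 1) / (1 + t)
  set S₁ := ∑ k ∈ Finset.range N, (-1 : ℝ) ^ k / (a + k)
  set S₂ := ∑ k ∈ Finset.range N, (-1 : ℝ) ^ k / (1 - a + k)
  calc |π⁻¹ * S₁ + π⁻¹ * S₂ - π⁻¹ * (J₁ + J₂)| = π⁻¹ * |(J₁ - S₁) + (J₂ - S₂)| := by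
        rw [show π⁻¹ * S₁ + π⁻¹ * S₂ - π⁻¹ * (J₁ + J₂) = -(π⁻¹ * ((J₁ - S₁) + (J₂ - S₂))) by
          ring, abs_neg, abs_mul, abs_of_pos (inv_pos.2 pi_pos)]
    _ ≤ π⁻¹ * (1 / N + 1 / N) := by
        gcongr
        exact (abs_add_le _ _).trans
          (add_le_add (hremainder ha.1) (hremainder (by linarith [ha.2])))
    _ = 2 / (π * N) := by field_simp; ring

lemma mul_cscPartialSum (y : ℝ) (N : ℕ) (x : ℝ) :
    y * cscPartialSum N x = ∑ k ∈ Finset.range N, (-1) ^ k * (y / (x + k * π)) := by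
  rw [cscPartialSum, Finset.mul_sum]
  exact Finset.sum_congr rfl fun k _ => by ring

section Lobachevsky

variable {g : ℝ → ℝ}

lemma intervalIntegrable_sin_div_mul (hg : Continuous g) (a b : ℝ) :
    IntervalIntegrable (fun x => sin x / x * g x) volume a b := by
  refine ((continuous_sinc.mul hg).intervalIntegrable a b).congr_ae ?_
  filter_upwards [ae_restrict_of_ae (volume.ae_ne 0)] with x hx
  rw [Pi.mul_apply, sinc_of_ne_zero hx]

lemma intervalIntegrable_sin_mul_div_add (hg : Continuous g) {c : ℝ} (hc : 0 ≤ c) :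
    IntervalIntegrable (fun x => sin x * g x / (x + c)) volume 0 π := by
  rcases hc.eq_or_lt with rfl | hc
  · exact (intervalIntegrable_sin_div_mul hg 0 π).congr fun x _ => by simp only [add_zero]; ring
  · refine ContinuousOn.intervalIntegrable
      ((continuous_sin.mul hg).continuousOn.div (by fun_prop) fun x hx => ?_)
    rw [uIcc_of_le pi_pos.le] at hx
    exact (by linarith [hx.1] : 0 < x + c).ne'

lemma intervalIntegrable_sin_mul_mul_cscPartialSum (hg : Continuous g) (N : ℕ) :
    IntervalIntegrable (fun x => sin x * g x * cscPartialSum N x) volume 0 π := by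
  simp only [mul_cscPartialSum]
  simpa only [Finset.sum_fn] using IntervalIntegrable.sum (Finset.range N)
    (f := fun k x => (-1) ^ k * (sin x * g x / (x + k * π)))
    fun k _ => (intervalIntegrable_sin_mul_div_add hg (by positivity)).const_mul _

lemma integral_sin_div_mul_eq_integral_sin_mul_mul_cscPartialSum (hg : Continuous g)
    (hper : ∀ x, 0 ≤ x → g (x + π) = g x) (N : ℕ) :
    ∫ x in (0 : ℝ)..N * π, sin x / x * g x =
      ∫ x in (0 : ℝ)..π, sin x * g x * cscPartialSum N x := by
  have hper_nat (k : ℕ) {x : ℝ} (hx : 0 ≤ x) : g (x + k * π) = g x := by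
    induction k with
    | zero => simp
    | succ k ih => rw [Nat.cast_succ, add_one_mul, ← add_assoc, hper _ (by positivity), ih]
  have hperiod (k : ℕ) : ∫ x in k * π..(k + 1 : ℕ) * π, sin x / x * g x =
      ∫ x in (0 : ℝ)..π, (-1) ^ k * (sin x * g x / (x + k * π)) := by
    have hshift := integral_comp_add_right (a := 0) (b := π) (fun x => sin x / x * g x) (k * π)
    rw [zero_add, add_comm π] at hshift
    rw [Nat.cast_succ, add_one_mul, ← hshift]
    refine integral_congr fun x hx => ?_
    rw [uIcc_of_le pi_pos.le] at hx
    simp only [sin_add_nat_mul_pi, hper_nat k hx.1]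
    ring
  calc ∫ x in (0 : ℝ)..N * π, sin x / x * g x
      = ∑ k ∈ Finset.range N, ∫ x in k * π..(k + 1 : ℕ) * π, sin x / x * g x := by
        rw [sum_integral_adjacent_intervals (a := fun k : ℕ => k * π)
          fun k _ => intervalIntegrable_sin_div_mul hg _ _]
        simp
    _ = ∫ x in (0 : ℝ)..π, ∑ k ∈ Finset.range N, (-1) ^ k * (sin x * g x / (x + k * π)) := by
        rw [integral_finsetSum fun k _ =>
          (intervalIntegrable_sin_mul_div_add hg (by positivity)).const_mul _]
        exact Finset.sum_congr rfl fun k _ => hperiod k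
    _ = ∫ x in (0 : ℝ)..π, sin x * g x * cscPartialSum N x := by
        simp only [mul_cscPartialSum]

lemma abs_integral_sin_div_mul_sub_le (hg : Continuous g) (hper : ∀ x, 0 ≤ x → g (x + π) = g x)
    (hsym : ∀ x, 0 ≤ x → g (π - x) = g x) {M : ℝ} (hM : ∀ x ∈ Icc 0 π, |g x| ≤ M) {N : ℕ}
    (hN : 0 < N) :
    |(∫ x in (0 : ℝ)..N * π, sin x / x * g x) - (∫ x in (0 : ℝ)..π, g x) / 2| ≤ M / N := by
  have hK := intervalIntegrable_sin_mul_mul_cscPartialSum hg N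
  set K := cscPartialSum N
  have hsym_sin {x : ℝ} (hx : x ∈ [[0, π]]) : sin (π - x) * g (π - x) = sin x * g x := by
    rw [uIcc_of_le pi_pos.le] at hx
    rw [sin_pi_sub, hsym x hx.1]
  have hreflect : ∫ x in (0 : ℝ)..π, sin x * g x * K (π - x) =
      ∫ x in (0 : ℝ)..π, sin x * g x * K x := by
    have h := integral_comp_sub_left (a := 0) (b := π) (fun x => sin x * g x * K x) π
    rw [sub_self, sub_zero] at h
    rw [← h]
    exact integral_congr fun x hx => by simp only [hsym_sin hx]
  have hK' : IntervalIntegrable (fun x => sin x * g x * K (π - x)) volume 0 π := by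
    have h := hK.comp_sub_left π
    rw [sub_self, sub_zero] at h
    exact h.symm.congr fun x hx => by simp only [hsym_sin (uIoc_subset_uIcc hx)]
  have hdiff : (∫ x in (0 : ℝ)..N * π, sin x / x * g x) - (∫ x in (0 : ℝ)..π, g x) / 2 =
      (∫ x in (0 : ℝ)..π, sin x * g x * K x + sin x * g x * K (π - x) - g x) / 2 := by
    rw [integral_sin_div_mul_eq_integral_sin_mul_mul_cscPartialSum hg hper,
      integral_sub (hK.add hK') (hg.intervalIntegrable 0 π), integral_add hK hK', hreflect]
    ring
  have hbound : ∀ᵐ x, x ∈ Ι 0 π →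
      ‖sin x * g x * K x + sin x * g x * K (π - x) - g x‖ ≤ M * (2 / (π * N)) := by
    filter_upwards [volume.ae_ne π] with x hxπ hx
    rw [uIoc_of_le pi_pos.le] at hx
    have hx' : x ∈ Ioo 0 π := ⟨hx.1, hx.2.lt_of_ne hxπ⟩
    have hsin : sin x ≠ 0 := (sin_pos_of_pos_of_lt_pi hx'.1 hx'.2).ne'
    have hfactor : sin x * g x * K x + sin x * g x * K (π - x) - g x =
        sin x * g x * (K x + K (π - x) - 1 / sin x) := by
      field_simp
    rw [hfactor, norm_mul, norm_mul, Real.norm_eq_abs, Real.norm_eq_abs, Real.norm_eq_abs]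
    have hgx := hM x (Ioo_subset_Icc_self hx')
    exact mul_le_mul ((mul_le_of_le_one_left (abs_nonneg _) (abs_sin_le_one x)).trans hgx)
      (abs_cscPartialSum_add_cscPartialSum_pi_sub_sub_le hx' hN) (abs_nonneg _)
      ((abs_nonneg _).trans hgx)
  rw [hdiff, abs_div, abs_two]
  calc |∫ x in (0 : ℝ)..π, sin x * g x * K x + sin x * g x * K (π - x) - g x| / 2
      ≤ M * (2 / (π * N)) * |π - 0| / 2 := by
        gcongr
        exact norm_integral_le_of_norm_le_const_ae hbound
    _ = M / N := by
        rw [sub_zero, abs_of_pos pi_pos]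
        field_simp

lemma integral_zero_pi_eq_two_mul_integral_zero_pi_div_two (hg : Continuous g)
    (hsym : ∀ x, 0 ≤ x → g (π - x) = g x) :
    ∫ x in (0 : ℝ)..π, g x = 2 * ∫ x in (0 : ℝ)..π / 2, g x := by
  have hreflect : ∫ x in π / 2..π, g x = ∫ x in (0 : ℝ)..π / 2, g x := by
    have h := integral_comp_sub_left (a := 0) (b := π / 2) g π
    rw [sub_zero, sub_half] at h
    rw [← h]
    refine integral_congr fun x hx => ?_
    rw [uIcc_of_le (by positivity)] at hx
    exact hsym x hx.1
  rw [← integral_add_adjacent_intervals (hg.intervalIntegrable 0 (π / 2))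
    (hg.intervalIntegrable (π / 2) π), hreflect, two_mul]

theorem tendsto_integral_sin_div_mul_nat_mul_pi (hg : Continuous g)
    (hper : ∀ x, 0 ≤ x → g (x + π) = g x) (hsym : ∀ x, 0 ≤ x → g (π - x) = g x) :
    Tendsto (fun N : ℕ => ∫ x in (0 : ℝ)..N * π, sin x / x * g x) atTop
      (𝓝 (∫ x in (0 : ℝ)..π / 2, g x)) := by
  obtain ⟨M, hM⟩ := isCompact_Icc.exists_bound_of_continuousOn (hg.continuousOn (s := Icc 0 π))
  have hlim : (∫ x in (0 : ℝ)..π / 2, g x) = (∫ x in (0 : ℝ)..π, g x) / 2 := by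
    rw [integral_zero_pi_eq_two_mul_integral_zero_pi_div_two hg hsym]
    ring
  rw [hlim, tendsto_iff_norm_sub_tendsto_zero]
  refine squeeze_zero_norm' ?_ (tendsto_const_div_atTop_nhds_zero_nat M)
  filter_upwards [eventually_gt_atTop 0] with N hN
  rw [norm_norm]
  exact abs_integral_sin_div_mul_sub_le hg hper hsym hM hN

end Lobachevsky

theorem integral_sin_pow_odd_div_id_mul_general (n : ℕ) (f : ℝ → ℝ)
    (hf : Continuous f)
    (hper : ∀ x : ℝ, 0 ≤ x → f (x + π) = f x)
    (hsym : ∀ x : ℝ, 0 ≤ x → f (π - x) = f x)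
    (I : ℝ)
    (hI : Tendsto (fun T : ℝ => ∫ x in (0:ℝ)..T, Real.sin x ^ (2 * n + 1) / x * f x)
      atTop (nhds I)) :
    I = ∫ x in (0:ℝ)..(π / 2), Real.sin x ^ (2 * n) * f x := by
  have hg : Continuous fun x => sin x ^ (2 * n) * f x := by fun_prop
  have hgper (x : ℝ) (hx : 0 ≤ x) : sin (x + π) ^ (2 * n) * f (x + π) = sin x ^ (2 * n) * f x := by
    rw [sin_add_pi, neg_pow, pow_mul, neg_one_sq, one_pow, one_mul, hper x hx]
  have hgsym (x : ℝ) (hx : 0 ≤ x) : sin (π - x) ^ (2 * n) * f (π - x) = sin x ^ (2 * n) * f x := by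
    rw [sin_pi_sub, hsym x hx]
  have hintegrand : (fun x => sin x ^ (2 * n + 1) / x * f x) =
      fun x => sin x / x * (sin x ^ (2 * n) * f x) := by
    ext x
    ring
  rw [hintegrand] at hI
  exact tendsto_nhds_unique (hI.comp (tendsto_natCast_atTop_atTop.atTop_mul_const pi_pos))
    (tendsto_integral_sin_div_mul_nat_mul_pi hg hgper hgsym)

/-- If `f` is continuous, `π`-periodic and symmetric about `π/2` on `[0, ∞)`, and the
improper integral `∫₀^∞ (sin^{2n+1} x / x) f x dx` converges to `I`, then
`I = ∫₀^{π/2} sin^{2n} x * f x dx`. -/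
theorem integral_sin_pow_odd_div_id_mul (n : ℕ) (hn : 0 < n) (f : ℝ → ℝ)
    (hf : Continuous f)
    (hper : ∀ x : ℝ, 0 ≤ x → f (x + π) = f x)
    (hsym : ∀ x : ℝ, 0 ≤ x → f (π - x) = f x)
    (I : ℝ)
    (hI : Tendsto (fun T : ℝ => ∫ x in (0:ℝ)..T, Real.sin x ^ (2 * n + 1) / x * f x)
      atTop (nhds I)) :
    I = ∫ x in (0:ℝ)..(π / 2), Real.sin x ^ (2 * n) * f x :=
  integral_sin_pow_odd_div_id_mul_general n f hf hper hsym I hI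
end

section
/- ∫₀^∞ (sin⁸x / x⁸) dx = 151π/630. -/
/-!
For `x > 0`, `7! / x⁸ = ∫₀^∞ t⁷ e^{-xt} dt`, so by Tonelli
`7! ∫₀^∞ sin⁸ x / x⁸ dx = ∫₀^∞ t⁷ L(t) dt`, where `L` is the Laplace transform of `sin⁸`.
Writing `sin⁸ x` as a cosine polynomial `∑ c_k cos (b_k x)` gives `L(t) = ∑ c_k t / (t² + b_k²)`,
and `t⁷ L(t)` is a combination of the functions `1 / (b_k² + t²)`, whose integrals over `(0, ∞)`
are `π / (2 b_k)`.
-/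

open Real MeasureTheory Set
open scoped Nat

theorem integral_pow_mul_exp_neg_mul_Ioi (n : ℕ) {r : ℝ} (hr : 0 < r) :
    ∫ t in Ioi 0, t ^ n * exp (-(r * t)) = n ! / r ^ (n + 1) := by
  have h := integral_rpow_mul_exp_neg_mul_Ioi (a := n + 1) (by positivity) hr
  simp only [add_sub_cancel_right, rpow_natCast] at h
  rw [h, Gamma_nat_eq_factorial, ← Nat.cast_add_one, rpow_natCast, div_pow, one_pow,
    one_div_mul_eq_div]

theorem integrableOn_pow_mul_exp_neg_mul_Ioi (n : ℕ) {r : ℝ} (hr : 0 < r) :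
    IntegrableOn (fun t : ℝ => t ^ n * exp (-(r * t))) (Ioi 0) := by
  simpa using integrableOn_rpow_mul_exp_neg_mul_rpow (p := 1) (s := n) (b := r)
    (by linarith [n.cast_nonneg (α := ℝ)]) one_pos hr

theorem integrable_and_integral_eq_of_lintegral_ofReal_eq {α : Type*} [MeasurableSpace α]
    {μ : Measure α} {f : α → ℝ} {c : ℝ} (hf : AEStronglyMeasurable f μ) (hf0 : 0 ≤ᵐ[μ] f)
    (hc : 0 ≤ c) (h : ∫⁻ x, ENNReal.ofReal (f x) ∂μ = ENNReal.ofReal c) :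
    Integrable f μ ∧ ∫ x, f x ∂μ = c :=
  ⟨⟨hf, (hasFiniteIntegral_iff_ofReal hf0).mpr (h ▸ ENNReal.ofReal_lt_top)⟩, by
    rw [integral_eq_lintegral_of_nonneg_ae hf0 hf, h, ENNReal.toReal_ofReal hc]⟩

noncomputable def laplaceTransform (g : ℝ → ℝ) (t : ℝ) : ℝ :=
  ∫ x in Ioi 0, exp (-(t * x)) * g x

theorem laplaceTransform_nonneg {g : ℝ → ℝ} (hg : ∀ x ∈ Ioi (0 : ℝ), 0 ≤ g x) (t : ℝ) :
    0 ≤ laplaceTransform g t :=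
  setIntegral_nonneg measurableSet_Ioi fun x hx => mul_nonneg (exp_pos _).le (hg x hx)

/-- Tonelli applied to `n! / x ^ (n + 1) = ∫₀^∞ tⁿ e^{-xt} dt`. -/
theorem lintegral_factorial_mul_div_pow_eq {g : ℝ → ℝ} (hg : Measurable g)
    (hg0 : ∀ x ∈ Ioi (0 : ℝ), 0 ≤ g x) (n : ℕ)
    (hL : ∀ t ∈ Ioi (0 : ℝ), IntegrableOn (fun x => exp (-(t * x)) * g x) (Ioi 0)) :
    ∫⁻ x in Ioi 0, ENNReal.ofReal (n ! * (g x / x ^ (n + 1))) =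
      ∫⁻ t in Ioi 0, ENNReal.ofReal (t ^ n * laplaceTransform g t) := by
  have hK0 : ∀ x ∈ Ioi (0 : ℝ), ∀ t ∈ Ioi (0 : ℝ), 0 ≤ t ^ n * (exp (-(t * x)) * g x) :=
    fun x hx t ht => mul_nonneg (pow_nonneg (le_of_lt ht) n) (mul_nonneg (exp_pos _).le (hg0 x hx))
  calc _ = ∫⁻ x in Ioi 0, ∫⁻ t in Ioi 0, ENNReal.ofReal (t ^ n * (exp (-(t * x)) * g x)) := by
        refine setLIntegral_congr_fun measurableSet_Ioi fun x hx => ?_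
        have hK : (fun t => t ^ n * (exp (-(t * x)) * g x)) =
            fun t => t ^ n * exp (-(x * t)) * g x := by
          funext t; ring_nf
        rw [← ofReal_integral_eq_lintegral_ofReal
            (hK ▸ (integrableOn_pow_mul_exp_neg_mul_Ioi n hx).mul_const _)
            (ae_restrict_of_forall_mem measurableSet_Ioi (hK0 x hx)),
          hK, integral_mul_const, integral_pow_mul_exp_neg_mul_Ioi n hx]
        ring_nf
    _ = ∫⁻ t in Ioi 0, ∫⁻ x in Ioi 0, ENNReal.ofReal (t ^ n * (exp (-(t * x)) * g x)) :=
        lintegral_lintegral_swap (by fun_prop)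
    _ = _ := by
        refine setLIntegral_congr_fun measurableSet_Ioi fun t ht => ?_
        rw [← ofReal_integral_eq_lintegral_ofReal ((hL t ht).const_mul _)
            (ae_restrict_of_forall_mem measurableSet_Ioi fun x hx => hK0 x hx t ht),
          integral_const_mul, laplaceTransform]

theorem integrableOn_div_pow_and_integral_eq {g : ℝ → ℝ} (hg : Measurable g)
    (hg0 : ∀ x ∈ Ioi (0 : ℝ), 0 ≤ g x) (n : ℕ)
    (hL : ∀ t ∈ Ioi (0 : ℝ), IntegrableOn (fun x => exp (-(t * x)) * g x) (Ioi 0))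
    (hI : IntegrableOn (fun t => t ^ n * laplaceTransform g t) (Ioi 0)) :
    IntegrableOn (fun x => g x / x ^ (n + 1)) (Ioi 0) ∧
      ∫ x in Ioi 0, g x / x ^ (n + 1) = (∫ t in Ioi 0, t ^ n * laplaceTransform g t) / n ! := by
  have hI0 : ∀ t ∈ Ioi (0 : ℝ), 0 ≤ t ^ n * laplaceTransform g t := fun t ht =>
    mul_nonneg (pow_nonneg (le_of_lt ht) n) (laplaceTransform_nonneg hg0 t)
  obtain ⟨hint, hval⟩ := integrable_and_integral_eq_of_lintegral_ofReal_eq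
    (by fun_prop : Measurable fun x => n ! * (g x / x ^ (n + 1))).aestronglyMeasurable
    (ae_restrict_of_forall_mem measurableSet_Ioi fun x (hx : 0 < x) => by
      have := hg0 x hx; positivity)
    (setIntegral_nonneg measurableSet_Ioi hI0)
    ((lintegral_factorial_mul_div_pow_eq hg hg0 n hL).trans <| .symm <|
      ofReal_integral_eq_lintegral_ofReal hI (ae_restrict_of_forall_mem measurableSet_Ioi hI0))
  have hdiv : (fun x => g x / x ^ (n + 1)) =
      fun x => (n ! : ℝ)⁻¹ * (n ! * (g x / x ^ (n + 1))) := by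
    funext x; field_simp
  rw [hdiv, integral_const_mul, hval, inv_mul_eq_div]
  exact ⟨hint.const_mul _, rfl⟩

theorem inv_sq_add_sq_eq_mul_inv_one_add_div_sq {a : ℝ} (ha : a ≠ 0) (t : ℝ) :
    (a ^ 2 + t ^ 2)⁻¹ = (a ^ 2)⁻¹ * (1 + (t / a) ^ 2)⁻¹ := by
  field_simp

theorem integrable_inv_sq_add_sq {a : ℝ} (ha : a ≠ 0) :
    Integrable fun t : ℝ => (a ^ 2 + t ^ 2)⁻¹ := by
  simp_rw [inv_sq_add_sq_eq_mul_inv_one_add_div_sq ha]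
  exact (integrable_inv_one_add_sq.comp_div ha).const_mul _

theorem integral_Ioi_inv_sq_add_sq {a : ℝ} (ha : 0 < a) :
    ∫ t in Ioi 0, (a ^ 2 + t ^ 2)⁻¹ = π / (2 * a) := by
  have h := integral_comp_mul_left_Ioi (fun u : ℝ => (1 + u ^ 2)⁻¹) 0 (inv_pos.mpr ha)
  simp only [mul_zero, integral_Ioi_inv_one_add_sq, arctan_zero, sub_zero, smul_eq_mul,
    inv_inv] at h
  simp_rw [inv_sq_add_sq_eq_mul_inv_one_add_div_sq ha.ne', div_eq_inv_mul _ a]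
  rw [integral_const_mul, h]
  field_simp

theorem exp_neg_mul_mul_cos_eq_re (t b x : ℝ) :
    exp (-(t * x)) * cos (b * x) = RCLike.re (Complex.exp ((-t + b * Complex.I) * x)) := by
  simp [Complex.exp_re]

theorem integrableOn_exp_neg_mul_mul_cos {t : ℝ} (ht : 0 < t) (b : ℝ) :
    IntegrableOn (fun x => exp (-(t * x)) * cos (b * x)) (Ioi 0) := by
  simp_rw [exp_neg_mul_mul_cos_eq_re]
  exact (integrableOn_exp_mul_complex_Ioi (by simpa using ht) 0).re

theorem laplaceTransform_cos {t : ℝ} (ht : 0 < t) (b : ℝ) :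
    laplaceTransform (fun x => cos (b * x)) t = t / (t ^ 2 + b ^ 2) := by
  have ha : (-t + b * Complex.I).re < 0 := by simpa using ht
  simp_rw [laplaceTransform, exp_neg_mul_mul_cos_eq_re]
  rw [integral_re (integrableOn_exp_mul_complex_Ioi ha 0), integral_exp_mul_complex_Ioi ha 0,
    Complex.ofReal_zero, mul_zero, Complex.exp_zero, neg_div, ← div_neg, neg_add, neg_neg,
    ← neg_mul, ← Complex.ofReal_neg, one_div, RCLike.re_to_complex, Complex.inv_re,
    Complex.normSq_add_mul_I, neg_sq]
  simp

theorem integrableOn_exp_neg_mul_mul_sum_cos {ι : Type*} (s : Finset ι) (c b : ι → ℝ) {t : ℝ}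
    (ht : 0 < t) :
    IntegrableOn (fun x => exp (-(t * x)) * ∑ k ∈ s, c k * cos (b k * x)) (Ioi 0) := by
  simp_rw [Finset.mul_sum, mul_left_comm (exp _)]
  exact integrable_finsetSum s fun k _ => (integrableOn_exp_neg_mul_mul_cos ht (b k)).const_mul _

theorem laplaceTransform_sum_cos {ι : Type*} (s : Finset ι) (c b : ι → ℝ) {t : ℝ} (ht : 0 < t) :
    laplaceTransform (fun x => ∑ k ∈ s, c k * cos (b k * x)) t =
      ∑ k ∈ s, c k * (t / (t ^ 2 + b k ^ 2)) := by
  simp_rw [laplaceTransform, Finset.mul_sum, mul_left_comm (exp _)]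
  rw [integral_finsetSum s fun k _ => (integrableOn_exp_neg_mul_mul_cos ht (b k)).const_mul _]
  simp_rw [integral_const_mul, ← laplaceTransform_cos ht, laplaceTransform]

theorem integrable_sum_div_sq_add_sq {ι : Type*} (s : Finset ι) (d a : ι → ℝ)
    (ha : ∀ k ∈ s, a k ≠ 0) : Integrable fun t : ℝ => ∑ k ∈ s, d k / (a k ^ 2 + t ^ 2) := by
  simp_rw [div_eq_mul_inv]
  exact integrable_finsetSum s fun k hk => (integrable_inv_sq_add_sq (ha k hk)).const_mul _

theorem integral_Ioi_sum_div_sq_add_sq {ι : Type*} (s : Finset ι) (d a : ι → ℝ)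
    (ha : ∀ k ∈ s, 0 < a k) :
    ∫ t in Ioi 0, ∑ k ∈ s, d k / (a k ^ 2 + t ^ 2) = ∑ k ∈ s, d k * (π / (2 * a k)) := by
  simp_rw [div_eq_mul_inv (d _)]
  rw [integral_finsetSum s fun k hk =>
    ((integrable_inv_sq_add_sq (ha k hk).ne').const_mul _).integrableOn]
  refine Finset.sum_congr rfl fun k hk => ?_
  rw [integral_const_mul, integral_Ioi_inv_sq_add_sq (ha k hk)]

theorem sin_pow_eight_eq_sum_cos (x : ℝ) :
    sin x ^ 8 = ∑ k : Fin 5, ![35, -56, 28, -8, 1] k / 128 * cos (![0, 2, 4, 6, 8] k * x) := by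
  have h2 : cos (2 * x) = 2 * cos x ^ 2 - 1 := cos_two_mul x
  have h4 : cos (4 * x) = 2 * cos (2 * x) ^ 2 - 1 := by
    rw [show (4 : ℝ) * x = 2 * (2 * x) by ring, cos_two_mul]
  have h6 : cos (6 * x) = 4 * cos (2 * x) ^ 3 - 3 * cos (2 * x) := by
    rw [show (6 : ℝ) * x = 3 * (2 * x) by ring, cos_three_mul]
  have h8 : cos (8 * x) = 2 * cos (4 * x) ^ 2 - 1 := by
    rw [show (8 : ℝ) * x = 2 * (4 * x) by ring, cos_two_mul]
  simp only [Fin.sum_univ_five, Matrix.cons_val, zero_mul, cos_zero]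
  rw [h8, h6, h4, h2, show sin x ^ 8 = (sin x ^ 2) ^ 4 by ring, sin_sq]
  ring

/-- The numerators are `c_k b_k⁸`: the polynomial parts of `t⁸ / (t² + b_k²)` cancel since
`∑ c_k b_k^(2j) = 0` for `j < 4`, i.e. since `sin⁸` vanishes to order 8 at `0`. -/
theorem pow_seven_mul_laplaceTransform_sin_pow_eight {t : ℝ} (ht : 0 < t) :
    t ^ 7 * laplaceTransform (fun x => sin x ^ 8) t =
      ∑ k : Fin 4, ![-112, 14336, -104976, 131072] k / (![2, 4, 6, 8] k ^ 2 + t ^ 2) := by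
  simp_rw [sin_pow_eight_eq_sum_cos]
  rw [laplaceTransform_sum_cos _ _ _ ht]
  simp only [Fin.sum_univ_five, Fin.sum_univ_four, Matrix.cons_val]
  field_simp
  ring

/-- `∫₀^∞ sin⁸ x / x⁸ dx = 151π / 630` (as an absolutely convergent Lebesgue integral). -/
theorem integral_sin_pow_eight_div_pow_eight :
    IntegrableOn (fun x : ℝ => Real.sin x ^ 8 / x ^ 8) (Set.Ioi 0) ∧
    ∫ x in Set.Ioi (0:ℝ), Real.sin x ^ 8 / x ^ 8 = 151 * π / 630 := by
  have hL : ∀ t ∈ Ioi (0 : ℝ), IntegrableOn (fun x => exp (-(t * x)) * sin x ^ 8) (Ioi 0) :=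
    fun t ht => by
      simp_rw [sin_pow_eight_eq_sum_cos]
      exact integrableOn_exp_neg_mul_mul_sum_cos _ _ _ ht
  have ha : ∀ k ∈ Finset.univ, (0 : ℝ) < ![2, 4, 6, 8] k := by
    intro k _; fin_cases k <;> norm_num
  have hI : IntegrableOn (fun t => t ^ 7 * laplaceTransform (fun x => sin x ^ 8) t) (Ioi 0) :=
    (integrable_sum_div_sq_add_sq _ _ _ fun k hk => (ha k hk).ne').integrableOn.congr_fun
      (fun t ht => (pow_seven_mul_laplaceTransform_sin_pow_eight ht).symm) measurableSet_Ioi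
  obtain ⟨hint, hval⟩ := integrableOn_div_pow_and_integral_eq (g := fun x => sin x ^ 8)
    (by fun_prop) (fun x _ => by positivity) 7 hL hI
  refine ⟨hint, ?_⟩
  rw [hval, setIntegral_congr_fun measurableSet_Ioi
    (fun t ht => pow_seven_mul_laplaceTransform_sin_pow_eight ht),
    integral_Ioi_sum_div_sq_add_sq _ _ _ ha]
  simp only [Fin.sum_univ_four, Matrix.cons_val, Nat.factorial]
  ring
end
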